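/- arXiv:2001.09858 — 2 statements merged into one kernel-verified Lean document; each statement's English description precedes it below -/
import Mathlib

section
/- Let Q(τ) = ∏_{j=1}^n (1 - β_j τ) with all β_j ≤ 0 and at least one β_j < 0, and μ < 0. Then the function φ(τ) = (e^{μτ}/Q(τ)) ∫_0^τ e^{-μx} Q(x) dx satisfies φ'(τ) > 0 for all τ > 0. -/
/-!
Write `G x = e^{-μx} Q(x)` and `F τ = ∫_0^τ G`, so that `φ = F / G`. With
`r = G'/G = -μ + ∑ⱼ -βⱼ / (1 - βⱼ x)` one gets `φ' = (G - r F) / G`. As every `βⱼ ≤ 0`, `r` is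
nonincreasing on `[0, ∞)`, hence `r(τ) F(τ) ≤ ∫_0^τ r G = G(τ) - G(0) < G(τ)`.
-/

open Real Set intervalIntegral

theorem mul_integral_le_sub_of_hasDerivAt_mul {G r : ℝ → ℝ} {a b : ℝ} (hab : a ≤ b)
    (hG : ∀ x ∈ Icc a b, HasDerivAt G (r x * G x) x) (hG_nonneg : ∀ x ∈ Icc a b, 0 ≤ G x)
    (hr : AntitoneOn r (Icc a b)) :
    r b * ∫ x in a..b, G x ≤ G b - G a := by
  have hGc : ContinuousOn G (uIcc a b) := by
    rw [uIcc_of_le hab]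
    exact fun x hx => (hG x hx).continuousAt.continuousWithinAt
  have hrG : IntervalIntegrable (fun x => r x * G x) MeasureTheory.volume a b :=
    (hr.mono (uIcc_of_le hab).subset).intervalIntegrable.mul_continuousOn hGc
  calc r b * ∫ x in a..b, G x = ∫ x in a..b, r b * G x := (integral_const_mul _ _).symm
    _ ≤ ∫ x in a..b, r x * G x :=
      integral_mono_on hab (hGc.intervalIntegrable.const_mul _) hrG fun x hx =>
        mul_le_mul_of_nonneg_right (hr hx ⟨hab, le_rfl⟩ hx.2) (hG_nonneg x hx)
    _ = G b - G a :=
      integral_eq_sub_of_hasDerivAt (fun x hx => hG x (uIcc_of_le hab ▸ hx)) hrG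

theorem deriv_integral_div_pos {G r : ℝ → ℝ} {a b : ℝ} (hab : a ≤ b) (hGc : Continuous G)
    (hG : ∀ x ∈ Icc a b, HasDerivAt G (r x * G x) x) (hG_pos : ∀ x ∈ Icc a b, 0 < G x)
    (hr : AntitoneOn r (Icc a b)) :
    0 < deriv (fun s => (∫ x in a..s, G x) / G s) b := by
  have hGb := hG_pos b ⟨hab, le_rfl⟩
  have hF : HasDerivAt (fun s => ∫ x in a..s, G x) (G b) b :=
    integral_hasDerivAt_right (hGc.intervalIntegrable _ _)
      hGc.aestronglyMeasurable.stronglyMeasurableAtFilter hGc.continuousAt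
  rw [(hF.fun_div (hG b ⟨hab, le_rfl⟩) hGb.ne').deriv]
  have key := mul_integral_le_sub_of_hasDerivAt_mul hab hG (fun x hx => (hG_pos x hx).le) hr
  have hGa := hG_pos a ⟨le_rfl, hab⟩
  apply div_pos _ (by positivity)
  nlinarith [mul_le_mul_of_nonneg_left key hGb.le, mul_pos hGb hGa]

variable {ι : Type*}

theorem hasDerivAt_prod_one_sub_mul {𝕜 : Type*} [NontriviallyNormedField 𝕜] (s : Finset ι)
    (β : ι → 𝕜) {x : 𝕜} (hx : ∀ j ∈ s, 1 - β j * x ≠ 0) :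
    HasDerivAt (fun y => ∏ j ∈ s, (1 - β j * y))
      ((∑ j ∈ s, -β j / (1 - β j * x)) * ∏ j ∈ s, (1 - β j * x)) x := by
  have hd : ∀ j ∈ s, DifferentiableAt 𝕜 (fun y => 1 - β j * y) x := fun _ _ => by fun_prop
  refine (DifferentiableAt.fun_finsetProd hd).hasDerivAt.congr_deriv ?_
  have hlog : ∀ j ∈ s, logDeriv (fun y => 1 - β j * y) x = -β j / (1 - β j * x) := by
    intro j _
    simp [logDeriv_apply]
  rw [← Finset.sum_congr rfl hlog, ← logDeriv_prod hx hd, logDeriv_apply,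
    div_mul_cancel₀ _ (Finset.prod_ne_zero_iff.mpr hx)]

theorem antitoneOn_sum_neg_div_one_sub_mul (s : Finset ι) {β : ι → ℝ} (hβ : ∀ j ∈ s, β j ≤ 0) :
    AntitoneOn (fun x => ∑ j ∈ s, -β j / (1 - β j * x)) (Ici 0) := by
  intro x hx y _ hxy
  refine Finset.sum_le_sum fun j hj => div_le_div_of_nonneg_left ?_ ?_ ?_
  · linarith [hβ j hj]
  · nlinarith [hβ j hj, mem_Ici.mp hx]
  · nlinarith [hβ j hj]

theorem hasDerivAt_exp_mul_prod_one_sub_mul (s : Finset ι) (β : ι → ℝ) (μ : ℝ) {x : ℝ}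
    (hx : ∀ j ∈ s, 1 - β j * x ≠ 0) :
    HasDerivAt (fun y => exp (-μ * y) * ∏ j ∈ s, (1 - β j * y))
      ((-μ + ∑ j ∈ s, -β j / (1 - β j * x)) * (exp (-μ * x) * ∏ j ∈ s, (1 - β j * x))) x := by
  have hexp : HasDerivAt (fun y => exp (-μ * y)) (-μ * exp (-μ * x)) x := by
    simpa [mul_comm] using ((hasDerivAt_id x).const_mul (-μ)).exp
  refine (hexp.fun_mul (hasDerivAt_prod_one_sub_mul s β hx)).congr_deriv ?_
  ring

theorem stmt_9_general (n : ℕ) (β : Fin n → ℝ) (hβ : ∀ j, β j ≤ 0)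
    (μ : ℝ) (Q φ : ℝ → ℝ)
    (hQ : ∀ τ : ℝ, Q τ = ∏ j, (1 - β j * τ))
    (hφ : ∀ τ : ℝ, φ τ =
      Real.exp (μ * τ) / Q τ * ∫ x in (0:ℝ)..τ, Real.exp (-μ * x) * Q x) :
    ∀ τ : ℝ, 0 < τ → 0 < deriv φ τ := by
  intro τ hτ
  obtain rfl : Q = fun τ => ∏ j, (1 - β j * τ) := funext hQ
  beta_reduce at hφ
  have hfac : ∀ x ∈ Icc 0 τ, ∀ j, 0 < 1 - β j * x := fun x hx j => by
    nlinarith [hβ j, hx.1]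
  have hφG : φ = fun s => (∫ x in (0:ℝ)..s, exp (-μ * x) * ∏ j, (1 - β j * x)) /
      (exp (-μ * s) * ∏ j, (1 - β j * s)) := by
    funext s
    have hexp : exp (-μ * s) = (exp (μ * s))⁻¹ := by rw [neg_mul, exp_neg]
    rw [hφ, hexp, div_eq_mul_inv, div_eq_mul_inv, mul_inv, inv_inv]
    ring
  rw [hφG]
  refine deriv_integral_div_pos hτ.le (by fun_prop)
    (fun x hx => hasDerivAt_exp_mul_prod_one_sub_mul _ β μ fun j _ => (hfac x hx j).ne')
    (fun x hx => mul_pos (exp_pos _) (Finset.prod_pos fun j _ => hfac x hx j)) ?_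
  exact ((antitoneOn_sum_neg_div_one_sub_mul _ fun j _ => hβ j).const_add (-μ)).mono
    Icc_subset_Ici_self

/-- Let `Q τ = ∏ j, (1 - β j τ)` with all `β j ≤ 0` and at least one
`β j < 0`, and `μ < 0`. Then `φ τ = (e^{μτ}/Q τ) ∫_0^τ e^{-μx} Q x dx` satisfies
`φ'(τ) > 0` for all `τ > 0`. -/
theorem stmt_9 (n : ℕ) (β : Fin n → ℝ) (hβ : ∀ j, β j ≤ 0) (hβ' : ∃ j, β j < 0)
    (μ : ℝ) (hμ : μ < 0) (Q φ : ℝ → ℝ)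
    (hQ : ∀ τ : ℝ, Q τ = ∏ j, (1 - β j * τ))
    (hφ : ∀ τ : ℝ, φ τ =
      Real.exp (μ * τ) / Q τ * ∫ x in (0:ℝ)..τ, Real.exp (-μ * x) * Q x) :
    ∀ τ : ℝ, 0 < τ → 0 < deriv φ τ :=
  stmt_9_general n β hβ μ Q φ hQ hφ
end

section
/- Let Q(τ) = τ^{m-1}·Q̂(τ) where Q̂ is a polynomial with Q̂(0) > 0 and all coefficients of Q nonnegative, and let μ < 0, m ≥ 2. Define φ(τ) = (e^{μτ}/Q(τ)) ∫_0^τ m e^{-μx} Q(x) dx for τ > 0. Then φ extends continuously to τ = 0 with φ(0) = 0, and φ(τ) = -m/μ + O(1/τ) as τ → ∞. -/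
/-!
Near `0` the integrand `m e^{-μx} Q(x)` is increasing, so `0 ≤ φ(τ) ≤ mτ`. At infinity, one
integration by parts (using `Q(0) = 0`) gives
`φ(τ) + m/μ = (m/μ) e^{μτ} (∫₀^τ e^{-μs} Q'(s) ds) / Q(τ)`. The integral is at most
`e^{-μτ} Q'(τ) / (-μ)` since `Q'` is increasing, and `τ Q'(τ) ≤ (deg Q) Q(τ)` because `Q` has
nonnegative coefficients, so the error is at most `m (deg Q) / (μ² τ)`.
-/

open Real Filter Asymptotics intervalIntegral Polynomial Set Topology

namespace Polynomial

variable {p : ℝ[X]}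

theorem eval_nonneg_of_coeff_nonneg (hp : ∀ n, 0 ≤ p.coeff n) {x : ℝ} (hx : 0 ≤ x) :
    0 ≤ p.eval x := by
  rw [eval_eq_sum_range]
  exact Finset.sum_nonneg fun i _ => mul_nonneg (hp i) (pow_nonneg hx i)

theorem monotoneOn_eval_of_coeff_nonneg (hp : ∀ n, 0 ≤ p.coeff n) :
    MonotoneOn p.eval (Ici 0) := fun x hx y _ hxy => by
  simp only [eval_eq_sum_range]
  exact Finset.sum_le_sum fun i _ =>
    mul_le_mul_of_nonneg_left (pow_le_pow_left₀ hx hxy i) (hp i)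

theorem coeff_derivative_nonneg (hp : ∀ n, 0 ≤ p.coeff n) (n : ℕ) :
    0 ≤ p.derivative.coeff n := by
  rw [coeff_derivative]
  have := hp (n + 1)
  positivity

theorem mul_eval_derivative_le (hp : ∀ n, 0 ≤ p.coeff n) {x : ℝ} (hx : 0 ≤ x) :
    x * p.derivative.eval x ≤ p.natDegree * p.eval x := by
  rw [derivative_eval, eval_eq_sum, Polynomial.sum_def, Polynomial.sum_def, Finset.mul_sum,
    Finset.mul_sum]
  refine Finset.sum_le_sum fun n hn => ?_
  have hpow : x * x ^ (n - 1) * n = x ^ n * n := by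
    rcases n with _ | n
    · simp
    · rw [Nat.add_sub_cancel, ← pow_succ']
  calc x * (p.coeff n * n * x ^ (n - 1)) = n * (p.coeff n * x ^ n) := by
        linear_combination p.coeff n * hpow
    _ ≤ p.natDegree * (p.coeff n * x ^ n) :=
        mul_le_mul_of_nonneg_right (by exact_mod_cast le_natDegree_of_mem_supp n hn)
          (mul_nonneg (hp n) (pow_nonneg hx n))

end Polynomial

theorem integral_exp_neg_mul {μ : ℝ} (hμ : μ ≠ 0) (τ : ℝ) :
    ∫ x in (0:ℝ)..τ, exp (-μ * x) = (exp (-μ * τ) - 1) / -μ := by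
  rw [integral_comp_mul_left (fun x => exp x) (neg_ne_zero.2 hμ), integral_exp, mul_zero,
    exp_zero, smul_eq_mul, inv_mul_eq_div]

theorem integral_exp_neg_mul_le {μ τ : ℝ} {f : ℝ → ℝ} (hμ : μ < 0) (hτ : 0 ≤ τ)
    (hf : Continuous f) (hfτ : ∀ s ∈ Icc 0 τ, f s ≤ f τ) (hf_nonneg : 0 ≤ f τ) :
    ∫ x in (0:ℝ)..τ, exp (-μ * x) * f x ≤ exp (-μ * τ) * f τ / -μ := by
  have hexp : Continuous fun x => exp (-μ * x) := by fun_prop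
  calc ∫ x in (0:ℝ)..τ, exp (-μ * x) * f x ≤ ∫ x in (0:ℝ)..τ, exp (-μ * x) * f τ :=
        integral_mono_on hτ ((hexp.mul hf).intervalIntegrable 0 τ)
          ((hexp.mul continuous_const).intervalIntegrable 0 τ) fun s hs =>
          mul_le_mul_of_nonneg_left (hfτ s hs) (exp_pos _).le
    _ = (exp (-μ * τ) - 1) / -μ * f τ := by
        rw [integral_mul_const, integral_exp_neg_mul hμ.ne]
    _ ≤ exp (-μ * τ) * f τ / -μ := by
        rw [div_mul_eq_mul_div]
        gcongr <;> linarith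

theorem integral_exp_neg_mul_mul_eval {μ : ℝ} (hμ : μ ≠ 0) (p : ℝ[X]) (τ : ℝ) :
    ∫ x in (0:ℝ)..τ, exp (-μ * x) * p.eval x =
      (p.eval 0 - exp (-μ * τ) * p.eval τ) / μ +
        (∫ x in (0:ℝ)..τ, exp (-μ * x) * p.derivative.eval x) / μ := by
  have hv : ∀ x ∈ uIcc 0 τ, HasDerivAt (fun x => exp (-μ * x) / -μ) (exp (-μ * x)) x := by
    intro x _
    have h := (((hasDerivAt_id x).const_mul (-μ)).exp).div_const (-μ)
    rwa [mul_one, mul_div_assoc, div_self (neg_ne_zero.2 hμ), mul_one] at h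
  have parts := integral_mul_deriv_eq_deriv_mul (fun x _ => p.hasDerivAt x) hv
    (p.derivative.continuous.intervalIntegrable 0 τ)
    ((by fun_prop : Continuous fun x => exp (-μ * x)).intervalIntegrable 0 τ)
  simp only [mul_comm (p.eval _), mul_div_assoc'] at parts
  rw [parts, integral_div]
  simp only [mul_zero, exp_zero, mul_comm (p.derivative.eval _)]
  field_simp
  ring

noncomputable def momentumProfile (m μ : ℝ) (p : ℝ[X]) (τ : ℝ) : ℝ :=
  exp (μ * τ) / p.eval τ * ∫ x in (0:ℝ)..τ, m * exp (-μ * x) * p.eval x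

section MomentumProfile

variable {m μ : ℝ} {p : ℝ[X]}

theorem momentumProfile_nonneg (hm : 0 ≤ m) (hp : ∀ n, 0 ≤ p.coeff n) {τ : ℝ} (hτ : 0 ≤ τ) :
    0 ≤ momentumProfile m μ p τ := by
  refine mul_nonneg (div_nonneg (exp_pos _).le (eval_nonneg_of_coeff_nonneg hp hτ))
    (integral_nonneg hτ fun x hx => ?_)
  have := eval_nonneg_of_coeff_nonneg hp hx.1
  positivity

theorem momentumProfile_le (hm : 0 ≤ m) (hμ : μ ≤ 0) (hp : ∀ n, 0 ≤ p.coeff n) {τ : ℝ}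
    (hτ : 0 ≤ τ) : momentumProfile m μ p τ ≤ m * τ := by
  rcases (eval_nonneg_of_coeff_nonneg hp hτ).eq_or_lt with hpτ | hpτ
  · rw [momentumProfile, ← hpτ, div_zero, zero_mul]
    positivity
  have hmono : ∀ x ∈ Icc 0 τ, m * exp (-μ * x) * p.eval x ≤ m * exp (-μ * τ) * p.eval τ :=
    fun x hx => by
      have hexp : exp (-μ * x) ≤ exp (-μ * τ) := exp_le_exp.2 (by nlinarith [hx.2])
      have hpx := monotoneOn_eval_of_coeff_nonneg hp hx.1 hτ hx.2
      have := eval_nonneg_of_coeff_nonneg hp hx.1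
      gcongr
  have hint : ∫ x in (0:ℝ)..τ, m * exp (-μ * x) * p.eval x ≤
      τ * (m * exp (-μ * τ) * p.eval τ) := by
    have hcont : Continuous fun x => m * exp (-μ * x) * p.eval x := by fun_prop
    have h := integral_mono_on hτ (hcont.intervalIntegrable 0 τ)
      (intervalIntegrable_const (μ := MeasureTheory.volume)) hmono
    rwa [integral_const, sub_zero, smul_eq_mul] at h
  calc momentumProfile m μ p τ ≤ exp (μ * τ) / p.eval τ * (τ * (m * exp (-μ * τ) * p.eval τ)) :=
        mul_le_mul_of_nonneg_left hint (by positivity)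
    _ = m * τ := by
        rw [neg_mul, exp_neg]
        field_simp

theorem tendsto_momentumProfile_nhdsGT_zero (hm : 0 ≤ m) (hμ : μ ≤ 0)
    (hp : ∀ n, 0 ≤ p.coeff n) : Tendsto (momentumProfile m μ p) (𝓝[>] 0) (𝓝 0) := by
  have hlin : Tendsto (fun τ : ℝ => m * τ) (𝓝[>] 0) (𝓝 0) :=
    tendsto_nhdsWithin_of_tendsto_nhds (by simpa using (continuous_const_mul m).tendsto 0)
  refine squeeze_zero' ?_ ?_ hlin <;> filter_upwards [self_mem_nhdsWithin] with τ hτ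
  · exact momentumProfile_nonneg hm hp (le_of_lt hτ)
  · exact momentumProfile_le hm hμ hp (le_of_lt hτ)

theorem momentumProfile_sub_eq (hμ : μ ≠ 0) (hp0 : p.eval 0 = 0) {τ : ℝ} (hpτ : p.eval τ ≠ 0) :
    momentumProfile m μ p τ - -m / μ = m / μ *
      (exp (μ * τ) * (∫ x in (0:ℝ)..τ, exp (-μ * x) * p.derivative.eval x) / p.eval τ) := by
  simp only [momentumProfile, mul_assoc, integral_const_mul]
  rw [integral_exp_neg_mul_mul_eval hμ, hp0, neg_mul, exp_neg]
  field_simp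
  ring

theorem abs_momentumProfile_sub_le (hm : 0 ≤ m) (hμ : μ < 0) (hp : ∀ n, 0 ≤ p.coeff n)
    (hp0 : p.eval 0 = 0) {τ : ℝ} (hτ : 0 < τ) (hpτ : 0 < p.eval τ) :
    |momentumProfile m μ p τ - -m / μ| ≤ m * p.natDegree / μ ^ 2 * (1 / τ) := by
  rw [momentumProfile_sub_eq hμ.ne hp0 hpτ.ne']
  set J := ∫ x in (0:ℝ)..τ, exp (-μ * x) * p.derivative.eval x
  have hp' := coeff_derivative_nonneg hp
  have hJ_nonneg : 0 ≤ J := integral_nonneg hτ.le fun x hx =>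
    mul_nonneg (exp_pos _).le (eval_nonneg_of_coeff_nonneg hp' hx.1)
  have hJ_le : J ≤ exp (-μ * τ) * p.derivative.eval τ / -μ :=
    integral_exp_neg_mul_le hμ hτ.le p.derivative.continuous
      (fun s hs => monotoneOn_eval_of_coeff_nonneg hp' hs.1 hτ.le hs.2)
      (eval_nonneg_of_coeff_nonneg hp' hτ.le)
  have hderiv := mul_eval_derivative_le hp hτ.le
  have hratio : exp (μ * τ) * J / p.eval τ ≤ p.natDegree / (-μ * τ) := by
    have hμτ : 0 < -μ * τ := mul_pos (neg_pos.2 hμ) hτ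
    rw [div_le_div_iff₀ hpτ hμτ]
    calc exp (μ * τ) * J * (-μ * τ)
        ≤ exp (μ * τ) * (exp (-μ * τ) * p.derivative.eval τ / -μ) * (-μ * τ) := by
          gcongr
      _ = τ * p.derivative.eval τ := by
          rw [neg_mul, exp_neg]
          field_simp [hμ.ne]
      _ ≤ p.natDegree * p.eval τ := hderiv
  rw [abs_mul, abs_of_nonneg (by positivity : 0 ≤ exp (μ * τ) * J / p.eval τ),
    abs_div, abs_of_nonneg hm, abs_of_neg hμ]
  calc m / -μ * (exp (μ * τ) * J / p.eval τ) ≤ m / -μ * (p.natDegree / (-μ * τ)) := by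
        gcongr
        exact div_nonneg hm (neg_nonneg.2 hμ.le)
    _ = m * p.natDegree / μ ^ 2 * (1 / τ) := by
        field_simp

theorem isBigO_momentumProfile_sub (hm : 0 ≤ m) (hμ : μ < 0) (hp : ∀ n, 0 ≤ p.coeff n)
    (hp0 : p.eval 0 = 0) (hpos : ∀ τ, 0 < τ → 0 < p.eval τ) :
    (fun τ => momentumProfile m μ p τ - -m / μ) =O[atTop] fun τ => 1 / τ := by
  refine IsBigO.of_bound (m * p.natDegree / μ ^ 2) ?_
  filter_upwards [eventually_gt_atTop 0] with τ hτ
  rw [Real.norm_eq_abs, Real.norm_of_nonneg (one_div_pos.2 hτ).le]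
  exact abs_momentumProfile_sub_le hm hμ hp hp0 hτ (hpos τ hτ)

end MomentumProfile

/-- Let `Q τ = τ^{m-1}·Q̂ τ` with `Q̂` a polynomial, `Q̂(0) > 0`, all
coefficients nonnegative, `μ < 0`, `m ≥ 2`, and
`φ τ = (e^{μτ}/Q τ) ∫_0^τ m e^{-μx} Q x dx` for `τ > 0`. Then `φ` extends continuously
to `τ = 0` with value `0`, and `φ(τ) = -m/μ + O(1/τ)` as `τ → ∞`. -/
theorem stmt_18 (m : ℕ) (hm : 2 ≤ m) (μ : ℝ) (hμ : μ < 0)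
    (Qhat : Polynomial ℝ) (hQ0 : 0 < Qhat.eval 0) (hcoeff : ∀ j, 0 ≤ Qhat.coeff j)
    (Q φ : ℝ → ℝ) (hQ : ∀ τ : ℝ, Q τ = τ ^ (m - 1) * Qhat.eval τ)
    (hφ : ∀ τ : ℝ, 0 < τ → φ τ =
      Real.exp (μ * τ) / Q τ * ∫ x in (0:ℝ)..τ, (m : ℝ) * Real.exp (-μ * x) * Q x) :
    Tendsto φ (nhdsWithin 0 (Set.Ioi 0)) (nhds 0) ∧
    (fun τ => φ τ - (-(m : ℝ) / μ)) =O[atTop] (fun τ => 1 / τ) := by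
  set P : ℝ[X] := X ^ (m - 1) * Qhat
  have hP : ∀ n, 0 ≤ P.coeff n := fun n => by
    rw [coeff_X_pow_mul']
    split_ifs
    exacts [hcoeff _, le_rfl]
  have hP0 : P.eval 0 = 0 := by simp [P, zero_pow (by omega : m - 1 ≠ 0)]
  have hPpos : ∀ τ, 0 < τ → 0 < P.eval τ := fun τ hτ => by
    rw [eval_mul, eval_pow, eval_X]
    exact mul_pos (pow_pos hτ _) (hQ0.trans_le
      (monotoneOn_eval_of_coeff_nonneg hcoeff self_mem_Ici hτ.le hτ.le))
  have hφP : ∀ τ, 0 < τ → momentumProfile m μ P τ = φ τ := fun τ hτ => by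
    have hQP : Q = P.eval := funext fun τ => by simp [P, hQ]
    rw [hφ τ hτ, hQP, momentumProfile]
  have hm0 : (0 : ℝ) ≤ m := m.cast_nonneg
  refine ⟨(tendsto_momentumProfile_nhdsGT_zero hm0 hμ.le hP).congr' ?_,
    (isBigO_momentumProfile_sub hm0 hμ hP hP0 hPpos).congr' ?_ EventuallyEq.rfl⟩
  · exact eventually_nhdsWithin_of_forall hφP
  · filter_upwards [eventually_gt_atTop 0] with τ hτ
    rw [hφP τ hτ]
end
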